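/- Two standard Young tableaux T and S of the same skew shape λ/μ are Knuth-equivalent (connected by a sequence of Knuth transformations on SYTs) if and only if their Yamanouchi permutations β(T) and β(S) are Knuth-equivalent as permutations. -/

import Mathlib

/-- `lam/mu` is a skew shape: `lam` and `mu` are partitions (1-indexed, weakly decreasing,
with finitely many nonzero parts) with `mu ⊆ lam`. -/
def IsSkewShape (lam mu : ℕ → ℕ) : Prop :=
  (∀ i, 1 ≤ i → lam (i+1) ≤ lam i) ∧ (∀ i, 1 ≤ i → mu (i+1) ≤ mu i) ∧
  (∀ i, mu i ≤ lam i) ∧ (∃ N, ∀ i, N ≤ i → lam i = 0)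

/-- A standard Young tableau of skew shape `lam/mu` with `n` entries, recorded by the
(1-indexed) row and column of each entry `1, …, n`.  Rows are numbered from top to
bottom, columns from left to right; the cells of `lam/mu` in row `r` are the columns `c`
with `mu r < c ≤ lam r`.  Entries increase along rows and columns.  The functions `row`
and `col` are normalized to `0` outside `{1, …, n}`. -/
structure SkewSYT (lam mu : ℕ → ℕ) (n : ℕ) where
  row : ℕ → ℕ
  col : ℕ → ℕ
  row_pos : ∀ k, 1 ≤ k → k ≤ n → 1 ≤ row k
  mem_cell : ∀ k, 1 ≤ k → k ≤ n → mu (row k) < col k ∧ col k ≤ lam (row k)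
  inj' : ∀ k l, 1 ≤ k → k ≤ n → 1 ≤ l → l ≤ n → row k = row l → col k = col l → k = l
  surj' : ∀ r c, 1 ≤ r → mu r < c → c ≤ lam r → ∃ k, 1 ≤ k ∧ k ≤ n ∧ row k = r ∧ col k = c
  row_inc : ∀ k l, 1 ≤ k → k < l → l ≤ n → row k = row l → col k < col l
  col_inc : ∀ k l, 1 ≤ k → k < l → l ≤ n → col k = col l → row k < row l
  row_out : ∀ k, ¬(1 ≤ k ∧ k ≤ n) → row k = 0
  col_out : ∀ k, ¬(1 ≤ k ∧ k ≤ n) → col k = 0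

/-- The peak set of a standard Young tableau: `i` (with `2 ≤ i ≤ n-1`) is a peak when
`i-1` is an ascent (`i` is not in a lower row than `i-1`) and `i` is a descent
(`i+1` is in a strictly lower row than `i`). -/
def SkewSYT.peakSet {lam mu : ℕ → ℕ} {n : ℕ} (T : SkewSYT lam mu n) : Set ℕ :=
  {i | 2 ≤ i ∧ i + 1 ≤ n ∧ T.row i ≤ T.row (i-1) ∧ T.row i < T.row (i+1)}

/-- The valley set of a standard Young tableau: `i-1` is a descent and `i` is an ascent. -/
def SkewSYT.valleySet {lam mu : ℕ → ℕ} {n : ℕ} (T : SkewSYT lam mu n) : Set ℕ :=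
  {i | 2 ≤ i ∧ i + 1 ≤ n ∧ T.row (i-1) < T.row i ∧ T.row (i+1) ≤ T.row i}

/-- Swap the values of `f` at positions `a` and `b`. -/
def swapFun (f : ℕ → ℕ) (a b : ℕ) : ℕ → ℕ :=
  fun k => if k = a then f b else if k = b then f a else f k

/-- The condition (in terms of the row word of the tableau) under which the Knuth
transformation `κ_i` on SYTs swaps the entries `i-1` and `i` (cases (i) and (iii)):
either `i` is a valley and `i+1` lies in a lower row than `i-1`, or `i` is a peak and
`i+1` does not lie in a lower row than `i-1`.  In the remaining cases (ii) and (iv)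
(`i` a valley with `i+1` not lower than `i-1`, or `i` a peak with `i+1` lower than `i-1`)
the entries `i` and `i+1` are swapped. -/
def swapLowCond (row : ℕ → ℕ) (i : ℕ) : Prop :=
  (row (i-1) < row i ∧ row (i+1) ≤ row i ∧ row (i-1) < row (i+1)) ∨
  (row i ≤ row (i-1) ∧ row i < row (i+1) ∧ row (i+1) ≤ row (i-1))

open scoped Classical in
/-- The effect of the Knuth transformation `κ_i` on a position function `f` (either the
row function or the column function of the tableau), the case distinction being made
through the row function `row`. -/
noncomputable def kSwap (row : ℕ → ℕ) (i : ℕ) (f : ℕ → ℕ) : ℕ → ℕ :=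
  if swapLowCond row i then swapFun f (i-1) i else swapFun f i (i+1)

/-- The row function of `κ_i T`. -/
noncomputable def kRow {lam mu : ℕ → ℕ} {n : ℕ} (T : SkewSYT lam mu n) (i : ℕ) : ℕ → ℕ :=
  kSwap T.row i T.row

/-- The column function of `κ_i T`. -/
noncomputable def kCol {lam mu : ℕ → ℕ} {n : ℕ} (T : SkewSYT lam mu n) (i : ℕ) : ℕ → ℕ :=
  kSwap T.row i T.col

/-- The Knuth transformation `κ_i` on words/permutations (moves `acb ↦ cab`, `bca ↦ bac`,
`cab ↦ acb`, `bac ↦ bca` for `a < b < c` at positions `i-1, i, i+1`). -/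
def kappaP (w : ℕ → ℕ) (i : ℕ) : ℕ → ℕ :=
  if (w (i-1) < w i ∧ w (i+1) < w i ∧ w (i-1) < w (i+1)) ∨
      (w i < w (i-1) ∧ w i < w (i+1) ∧ w (i+1) < w (i-1)) then
    fun j => if j = i - 1 then w i else if j = i then w (i-1) else w j
  else
    fun j => if j = i then w (i+1) else if j = i + 1 then w i else w j

/-- The peak set of a permutation/word: `w (i-1) < w i > w (i+1)` with `2 ≤ i ≤ n-1`. -/
def peakSetP (n : ℕ) (w : ℕ → ℕ) : Set ℕ :=
  {i | 2 ≤ i ∧ i + 1 ≤ n ∧ w (i-1) < w i ∧ w (i+1) < w i}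

/-- The valley set of a permutation/word: `w (i-1) > w i < w (i+1)` with `2 ≤ i ≤ n-1`. -/
def valleySetP (n : ℕ) (w : ℕ → ℕ) : Set ℕ :=
  {i | 2 ≤ i ∧ i + 1 ≤ n ∧ w i < w (i-1) ∧ w i < w (i+1)}

/-- An elementary Knuth move between permutations/words of length `n`. -/
def KStepP (n : ℕ) (w w' : ℕ → ℕ) : Prop :=
  ∃ i, 2 ≤ i ∧ i + 1 ≤ n ∧
    ((w (i-1) < w i ∧ w (i+1) < w i) ∨ (w i < w (i-1) ∧ w i < w (i+1))) ∧
    w' = kappaP w i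

/-- Knuth equivalence of permutations/words of length `n`. -/
def KEquivP (n : ℕ) : (ℕ → ℕ) → (ℕ → ℕ) → Prop := Relation.ReflTransGen (KStepP n)

/-- The Yamanouchi permutation associated to the Yamanouchi word `y` of an SYT of skew
shape `lam/mu` (with `a_i = lam i - mu i`): the `a_i` occurrences of the letter `i` are
replaced, from left to right in decreasing order, by the numbers
`a_1 + ⋯ + a_{i-1} + 1, …, a_1 + ⋯ + a_{i-1} + a_i`; thus position `j` receives
`a_1 + ⋯ + a_{y j - 1}` plus the number of occurrences of `y j` at positions `≥ j`. -/
def yamPerm (lam mu : ℕ → ℕ) (n : ℕ) (y : ℕ → ℕ) : ℕ → ℕ :=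
  fun j => (∑ t ∈ Finset.Ico 1 (y j), (lam t - mu t)) +
    ((Finset.Icc j n).filter (fun t => y t = y j)).card

/-- An elementary Knuth move between standard Young tableaux of skew shape `lam/mu`. -/
def KStepT {lam mu : ℕ → ℕ} {n : ℕ} (T S : SkewSYT lam mu n) : Prop :=
  ∃ i, i ∈ T.peakSet ∪ T.valleySet ∧ S.row = kRow T i ∧ S.col = kCol T i

/-!
For positions `j < k` we have `β(T) j < β(T) k` exactly when `j` lies in a strictly higher row
of `T` than `k`: the labels of a row decrease from left to right and lie above the labels of
every higher row. Hence the peaks and valleys of `β(T)` are the valleys and peaks of `T`, and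
the move `κ_i` on `β(T)` exchanges the same adjacent positions `p, p + 1` as the move `κ_i` on
`T`. These two entries lie in different rows, so exchanging them commutes with `β`, and every
move of tableaux is a move of permutations. Conversely a move of `β(T)` lifts to `T`: the two
exchanged entries also lie in different columns (a `2 × 2` argument that uses that `λ/μ` is a
skew shape), and `T` is recovered from `β(T)`, which determines the row of each entry, while
each row is filled from left to right.
-/

open Finset

theorem Relation.ReflTransGen.of_injective_lift {α β : Type*} {r : α → α → Prop}
    {p : β → β → Prop} (f : α → β) (hf : Function.Injective f)
    (hlift : ∀ a b', p (f a) b' → ∃ b, r a b ∧ f b = b') {a b : α}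
    (hab : Relation.ReflTransGen p (f a) (f b)) : Relation.ReflTransGen r a b := by
  suffices ∀ b', Relation.ReflTransGen p (f a) b' →
      ∃ c, Relation.ReflTransGen r a c ∧ f c = b' by
    obtain ⟨c, hac, hc⟩ := this _ hab
    rwa [← hf hc]
  intro b' hb'
  induction hb' with
  | refl => exact ⟨a, .refl, rfl⟩
  | tail _ hstep ih =>
    obtain ⟨c, hac, rfl⟩ := ih
    obtain ⟨d, hcd, rfl⟩ := hlift c _ hstep
    exact ⟨d, hac.tail hcd, rfl⟩

theorem IsSkewShape.lam_antitoneOn {lam mu : ℕ → ℕ} (h : IsSkewShape lam mu) :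
    AntitoneOn lam (Set.Ici 1) :=
  antitoneOn_nat_Ici_of_succ_le h.1

theorem IsSkewShape.mu_antitoneOn {lam mu : ℕ → ℕ} (h : IsSkewShape lam mu) :
    AntitoneOn mu (Set.Ici 1) :=
  antitoneOn_nat_Ici_of_succ_le h.2.1

theorem swapFun_eq_comp_swap (f : ℕ → ℕ) (a b : ℕ) :
    swapFun f a b = f ∘ Equiv.swap a b := by
  funext k
  simp only [swapFun, Function.comp_apply, Equiv.swap_apply_def]
  split_ifs <;> rfl

section SwapSucc

variable {p n k l : ℕ}

theorem swap_succ_apply_mem (hp : 1 ≤ p) (hpn : p + 1 ≤ n) (hk1 : 1 ≤ k) (hkn : k ≤ n) :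
    1 ≤ Equiv.swap p (p + 1) k ∧ Equiv.swap p (p + 1) k ≤ n := by
  rw [Equiv.swap_apply_def]
  split_ifs <;> omega

theorem swap_succ_apply_lt (hkl : k < l) (h : ¬(k = p ∧ l = p + 1)) :
    Equiv.swap p (p + 1) k < Equiv.swap p (p + 1) l := by
  simp only [Equiv.swap_apply_def]
  split_ifs <;> omega

end SwapSucc

namespace SkewSYT

variable {lam mu : ℕ → ℕ} {n : ℕ} (T : SkewSYT lam mu n)

theorem le_of_row_eq_of_col_le {k l : ℕ} (hl1 : 1 ≤ l) (hkn : k ≤ n) (hr : T.row k = T.row l)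
    (hc : T.col k ≤ T.col l) : k ≤ l := by
  by_contra! hlk
  have := T.row_inc l k hl1 hlk hkn hr.symm
  omega

theorem le_of_col_eq_of_row_le {k l : ℕ} (hl1 : 1 ≤ l) (hkn : k ≤ n) (hc : T.col k = T.col l)
    (hr : T.row k ≤ T.row l) : k ≤ l := by
  by_contra! hlk
  have := T.col_inc l k hl1 hlk hkn hc.symm
  omega

theorem mem_shape_of_between (h : IsSkewShape lam mu) {k l r c : ℕ}
    (hk1 : 1 ≤ k) (hkn : k ≤ n) (hl1 : 1 ≤ l) (hln : l ≤ n) (hr : T.row k ≤ r)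
    (hr' : r ≤ T.row l) (hc : T.col k ≤ c) (hc' : c ≤ T.col l) :
    1 ≤ r ∧ mu r < c ∧ c ≤ lam r := by
  have hrk := T.row_pos k hk1 hkn
  have hmu := h.mu_antitoneOn (Set.mem_Ici.2 hrk) (Set.mem_Ici.2 (hrk.trans hr)) hr
  have hlam := h.lam_antitoneOn (Set.mem_Ici.2 (hrk.trans hr))
    (Set.mem_Ici.2 (hrk.trans (hr.trans hr'))) hr'
  have := T.mem_cell k hk1 hkn
  have := T.mem_cell l hl1 hln
  omega

theorem le_of_row_le_of_col_le (h : IsSkewShape lam mu) {k l : ℕ}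
    (hk1 : 1 ≤ k) (hkn : k ≤ n) (hl1 : 1 ≤ l) (hln : l ≤ n) (hr : T.row k ≤ T.row l)
    (hc : T.col k ≤ T.col l) : k ≤ l := by
  obtain ⟨hr1, hmu, hlam⟩ := T.mem_shape_of_between h hk1 hkn hl1 hln le_rfl hr hc le_rfl
  obtain ⟨f, hf1, hfn, hfr, hfc⟩ := T.surj' _ _ hr1 hmu hlam
  have hkf := T.le_of_row_eq_of_col_le hf1 hkn hfr.symm (hfc ▸ hc)
  have hfl := T.le_of_col_eq_of_row_le hl1 hfn hfc (hfr ▸ hr)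
  omega

theorem exists_entry_between (h : IsSkewShape lam mu) {k l r c : ℕ}
    (hk1 : 1 ≤ k) (hkn : k ≤ n) (hl1 : 1 ≤ l) (hln : l ≤ n) (hr : T.row k ≤ r)
    (hr' : r ≤ T.row l) (hc : T.col k ≤ c) (hc' : c ≤ T.col l) :
    ∃ e, k ≤ e ∧ e ≤ l ∧ T.row e = r ∧ T.col e = c := by
  obtain ⟨hr1, hmu, hlam⟩ := T.mem_shape_of_between h hk1 hkn hl1 hln hr hr' hc hc'
  obtain ⟨e, he1, hen, her, hec⟩ := T.surj' r c hr1 hmu hlam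
  exact ⟨e, T.le_of_row_le_of_col_le h hk1 hkn he1 hen (her ▸ hr) (hec ▸ hc),
    T.le_of_row_le_of_col_le h he1 hen hl1 hln (her ▸ hr') (hec ▸ hc'), her, hec⟩

theorem row_succ_of_col_eq (h : IsSkewShape lam mu) {k : ℕ}
    (hk1 : 1 ≤ k) (hkn : k + 1 ≤ n) (hc : T.col k = T.col (k + 1)) :
    T.row (k + 1) = T.row k + 1 := by
  have hlt := T.col_inc k (k + 1) hk1 (by omega) hkn hc
  obtain ⟨e, hke, hek, her, -⟩ := T.exists_entry_between h (r := T.row k + 1) hk1 (by omega)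
    (by omega) hkn (by omega) hlt le_rfl hc.le
  obtain rfl | rfl : e = k ∨ e = k + 1 := by omega
  · omega
  · exact her

theorem col_ne_col_succ_of_valley (h : IsSkewShape lam mu) {k : ℕ}
    (hk1 : 1 ≤ k) (hkn : k + 2 ≤ n) (h02 : T.row k < T.row (k + 2))
    (h21 : T.row (k + 2) ≤ T.row (k + 1)) :
    T.col k ≠ T.col (k + 1) := by
  -- `k + 1` would sit below `k` and left of `k + 2`, so the cell right of `k` would hold an
  -- entry strictly between `k` and `k + 2` other than `k + 1`
  intro hc
  have h1 := T.row_succ_of_col_eq h hk1 (by omega) hc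
  have h2 := T.row_inc (k + 1) (k + 2) (by omega) (by omega) hkn (by omega)
  obtain ⟨e, hke, hek, her, hec⟩ := T.exists_entry_between h (l := k + 2) hk1 (by omega)
    (by omega) hkn le_rfl h02.le (by omega) le_rfl
  obtain rfl | rfl | rfl : e = k ∨ e = k + 1 ∨ e = k + 2 := by omega
  all_goals omega

theorem col_succ_ne_col_succ_succ_of_peak (h : IsSkewShape lam mu) {k : ℕ}
    (hk1 : 1 ≤ k) (hkn : k + 2 ≤ n) (h10 : T.row (k + 1) ≤ T.row k)
    (h02 : T.row k < T.row (k + 2)) :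
    T.col (k + 1) ≠ T.col (k + 2) := by
  -- `k + 1` would sit right of `k` and above `k + 2`, so the cell below `k` would hold an
  -- entry strictly between `k` and `k + 2` other than `k + 1`
  intro hc
  have h1 : T.row (k + 2) = T.row (k + 1) + 1 := T.row_succ_of_col_eq h (by omega) hkn hc
  have h2 := T.row_inc k (k + 1) hk1 (by omega) (by omega) (by omega)
  obtain ⟨e, hke, hek, her, hec⟩ := T.exists_entry_between h (l := k + 2) (r := T.row (k + 2))
    hk1 (by omega) (by omega) hkn h02.le le_rfl le_rfl (by omega)
  obtain rfl | rfl | rfl : e = k ∨ e = k + 1 ∨ e = k + 2 := by omega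
  all_goals omega

def swapSucc (p : ℕ) (hp : 1 ≤ p) (hpn : p + 1 ≤ n) (hr : T.row p ≠ T.row (p + 1))
    (hc : T.col p ≠ T.col (p + 1)) : SkewSYT lam mu n where
  row := T.row ∘ Equiv.swap p (p + 1)
  col := T.col ∘ Equiv.swap p (p + 1)
  row_pos k hk1 hkn :=
    T.row_pos _ (swap_succ_apply_mem hp hpn hk1 hkn).1 (swap_succ_apply_mem hp hpn hk1 hkn).2
  mem_cell k hk1 hkn :=
    T.mem_cell _ (swap_succ_apply_mem hp hpn hk1 hkn).1 (swap_succ_apply_mem hp hpn hk1 hkn).2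
  inj' k l hk1 hkn hl1 hln hre hce := (Equiv.swap p (p + 1)).injective <|
    T.inj' _ _ (swap_succ_apply_mem hp hpn hk1 hkn).1 (swap_succ_apply_mem hp hpn hk1 hkn).2
      (swap_succ_apply_mem hp hpn hl1 hln).1 (swap_succ_apply_mem hp hpn hl1 hln).2 hre hce
  surj' r c hr1 hmu hlam := by
    obtain ⟨k, hk1, hkn, hkr, hkc⟩ := T.surj' r c hr1 hmu hlam
    refine ⟨Equiv.swap p (p + 1) k, (swap_succ_apply_mem hp hpn hk1 hkn).1,
      (swap_succ_apply_mem hp hpn hk1 hkn).2, ?_, ?_⟩ <;>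
    simpa only [Function.comp_apply, Equiv.swap_apply_self]
  row_inc k l hk1 hkl hln hre := by
    by_cases hkl' : k = p ∧ l = p + 1
    · obtain ⟨rfl, rfl⟩ := hkl'
      simp only [Function.comp_apply, Equiv.swap_apply_left, Equiv.swap_apply_right] at hre
      exact absurd hre.symm hr
    · exact T.row_inc _ _ (swap_succ_apply_mem hp hpn hk1 (by omega)).1
        (swap_succ_apply_lt hkl hkl') (swap_succ_apply_mem hp hpn (by omega) hln).2 hre
  col_inc k l hk1 hkl hln hce := by
    by_cases hkl' : k = p ∧ l = p + 1
    · obtain ⟨rfl, rfl⟩ := hkl'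
      simp only [Function.comp_apply, Equiv.swap_apply_left, Equiv.swap_apply_right] at hce
      exact absurd hce.symm hc
    · exact T.col_inc _ _ (swap_succ_apply_mem hp hpn hk1 (by omega)).1
        (swap_succ_apply_lt hkl hkl') (swap_succ_apply_mem hp hpn (by omega) hln).2 hce
  row_out k hk := by
    rw [Function.comp_apply, Equiv.swap_apply_of_ne_of_ne (by omega) (by omega), T.row_out k hk]
  col_out k hk := by
    rw [Function.comp_apply, Equiv.swap_apply_of_ne_of_ne (by omega) (by omega), T.col_out k hk]

theorem card_filter_row_eq_le (s : Finset ℕ) (hs : ∀ t ∈ s, 1 ≤ t ∧ t ≤ n) (r : ℕ) :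
    #{t ∈ s | T.row t = r} ≤ lam r - mu r := by
  rw [← Nat.card_Ioc]
  refine card_le_card_of_injOn T.col (fun t ht => ?_) (fun a ha b hb hab => ?_)
  · simp only [mem_coe, mem_filter] at ht
    have := T.mem_cell t (hs t ht.1).1 (hs t ht.1).2
    rw [ht.2] at this
    simpa using this
  · simp only [mem_coe, mem_filter] at ha hb
    exact T.inj' a b (hs a ha.1).1 (hs a ha.1).2 (hs b hb.1).1 (hs b hb.1).2
      (ha.2.trans hb.2.symm) hab

theorem col_eq_mu_add_card {k : ℕ} (hk1 : 1 ≤ k) (hkn : k ≤ n) :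
    T.col k = mu (T.row k) + #{l ∈ Icc 1 k | T.row l = T.row k} := by
  have hcell := T.mem_cell k hk1 hkn
  suffices #{l ∈ Icc 1 k | T.row l = T.row k} = #(Ioc (mu (T.row k)) (T.col k)) by
    rw [this, Nat.card_Ioc]; omega
  apply card_nbij T.col
  · intro l hl
    simp only [mem_coe, mem_filter, mem_Icc] at hl
    have hcl := T.mem_cell l hl.1.1 (hl.1.2.trans hkn)
    rw [hl.2] at hcl
    simp only [coe_Ioc, Set.mem_Ioc]
    refine ⟨hcl.1, ?_⟩
    rcases hl.1.2.eq_or_lt with rfl | hlk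
    · exact le_rfl
    · exact (T.row_inc l k hl.1.1 hlk hkn hl.2).le
  · intro a ha b hb hab
    simp only [mem_coe, mem_filter, mem_Icc] at ha hb
    exact T.inj' a b ha.1.1 (ha.1.2.trans hkn) hb.1.1 (hb.1.2.trans hkn)
      (ha.2.trans hb.2.symm) hab
  · intro c hc
    simp only [coe_Ioc, Set.mem_Ioc] at hc
    obtain ⟨l, hl1, hln, hlr, hlc⟩ :=
      T.surj' (T.row k) c (T.row_pos k hk1 hkn) hc.1 (hc.2.trans hcell.2)
    refine ⟨l, ?_, hlc⟩
    simp only [mem_coe, mem_filter, mem_Icc]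
    exact ⟨⟨hl1, T.le_of_row_eq_of_col_le hk1 hln hlr (hlc ▸ hc.2)⟩, hlr⟩

theorem ext_of_row_eq {T S : SkewSYT lam mu n} (hr : T.row = S.row) : T = S := by
  have hc : T.col = S.col := by
    funext k
    by_cases hk : 1 ≤ k ∧ k ≤ n
    · rw [col_eq_mu_add_card T hk.1 hk.2, col_eq_mu_add_card S hk.1 hk.2, hr]
    · rw [T.col_out k hk, S.col_out k hk]
  cases T; cases S
  simp only at hr hc
  subst hr hc
  rfl

end SkewSYT

section Yamanouchi

variable {lam mu : ℕ → ℕ} {n : ℕ}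

theorem yamPerm_swapFun (y : ℕ → ℕ) {p : ℕ} (hpn : p + 1 ≤ n) (hy : y p ≠ y (p + 1)) :
    yamPerm lam mu n (swapFun y p (p + 1)) = swapFun (yamPerm lam mu n y) p (p + 1) := by
  rw [swapFun_eq_comp_swap, swapFun_eq_comp_swap]
  funext j
  simp only [yamPerm, Function.comp_apply]
  congr 1
  rw [← card_map (Equiv.swap p (p + 1)).toEmbedding]
  congr 1
  ext t
  simp only [mem_map_equiv, mem_filter, mem_Icc, Equiv.symm_swap, Equiv.swap_apply_self]
  refine and_congr_left fun hyt => ?_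
  -- the two sides can only differ when `{j, t} = {p, p + 1}`, where `hyt` contradicts `hy`
  rw [Equiv.swap_apply_def, Equiv.swap_apply_def] at *
  split_ifs at * <;> subst_vars <;> simp_all <;> omega

theorem sum_lt_yamPerm (y : ℕ → ℕ) {k : ℕ} (hkn : k ≤ n) :
    ∑ t ∈ Ico 1 (y k), (lam t - mu t) < yamPerm lam mu n y k := by
  have : k ∈ {t ∈ Icc k n | y t = y k} := by simp [hkn]
  have := card_pos.2 ⟨k, this⟩
  unfold yamPerm
  omega

theorem yamPerm_le_sum (T : SkewSYT lam mu n) {k : ℕ} (hk1 : 1 ≤ k) (hkn : k ≤ n) :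
    yamPerm lam mu n T.row k ≤ ∑ t ∈ Ico 1 (T.row k + 1), (lam t - mu t) := by
  rw [sum_Ico_succ_top (T.row_pos k hk1 hkn)]
  exact Nat.add_le_add_left (T.card_filter_row_eq_le _
    (fun t ht => ⟨hk1.trans (mem_Icc.1 ht).1, (mem_Icc.1 ht).2⟩) _) _

theorem yamPerm_lt_of_row_lt (T S : SkewSYT lam mu n) {j k : ℕ} (hj1 : 1 ≤ j) (hjn : j ≤ n)
    (hkn : k ≤ n) (h : T.row j < S.row k) :
    yamPerm lam mu n T.row j < yamPerm lam mu n S.row k :=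
  calc yamPerm lam mu n T.row j
      ≤ ∑ t ∈ Ico 1 (T.row j + 1), (lam t - mu t) := yamPerm_le_sum T hj1 hjn
    _ ≤ ∑ t ∈ Ico 1 (S.row k), (lam t - mu t) :=
      sum_le_sum_of_subset (Ico_subset_Ico le_rfl h)
    _ < yamPerm lam mu n S.row k := sum_lt_yamPerm _ hkn

theorem yamPerm_lt_of_row_le (T : SkewSYT lam mu n) {j k : ℕ} (hj1 : 1 ≤ j) (hjk : j < k)
    (hkn : k ≤ n) (h : T.row k ≤ T.row j) :
    yamPerm lam mu n T.row k < yamPerm lam mu n T.row j := by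
  rcases h.eq_or_lt with h | h
  · unfold yamPerm
    rw [h]
    refine Nat.add_lt_add_left (card_lt_card ⟨?_, fun hsub => ?_⟩) _
    · exact filter_subset_filter _ (Icc_subset_Icc hjk.le le_rfl)
    · have := hsub (mem_filter.2 ⟨mem_Icc.2 ⟨le_rfl, by omega⟩, rfl⟩)
      simp only [mem_filter, mem_Icc] at this
      omega
  · exact yamPerm_lt_of_row_lt T T (by omega) hkn (by omega) h

theorem yamPerm_lt_iff_row_lt (T : SkewSYT lam mu n) {j k : ℕ} (hj1 : 1 ≤ j) (hjk : j < k)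
    (hkn : k ≤ n) :
    yamPerm lam mu n T.row j < yamPerm lam mu n T.row k ↔ T.row j < T.row k := by
  refine ⟨fun hy => ?_, yamPerm_lt_of_row_lt T T hj1 (by omega) hkn⟩
  by_contra! h
  exact (yamPerm_lt_of_row_le T hj1 hjk hkn h).asymm hy

theorem yamPerm_lt_iff_row_le (T : SkewSYT lam mu n) {j k : ℕ} (hj1 : 1 ≤ j) (hjk : j < k)
    (hkn : k ≤ n) :
    yamPerm lam mu n T.row k < yamPerm lam mu n T.row j ↔ T.row k ≤ T.row j := by
  refine ⟨fun hy => ?_, yamPerm_lt_of_row_le T hj1 hjk hkn⟩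
  by_contra! h
  exact (yamPerm_lt_of_row_lt T T hj1 (by omega) hkn h).asymm hy

theorem yamPerm_row_injective :
    Function.Injective fun T : SkewSYT lam mu n => yamPerm lam mu n T.row := by
  intro T S hTS
  refine SkewSYT.ext_of_row_eq (funext fun k => ?_)
  by_cases hk : 1 ≤ k ∧ k ≤ n
  · have hk' := congrFun hTS k
    rcases lt_trichotomy (T.row k) (S.row k) with h | h | h
    · exact absurd hk' (yamPerm_lt_of_row_lt T S hk.1 hk.2 hk.2 h).ne
    · exact h
    · exact absurd hk' (yamPerm_lt_of_row_lt S T hk.1 hk.2 hk.2 h).ne'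
  · rw [T.row_out k hk, S.row_out k hk]

theorem peakSetP_yamPerm (T : SkewSYT lam mu n) :
    peakSetP n (yamPerm lam mu n T.row) = T.valleySet := by
  ext i
  refine and_congr_right fun hi2 => and_congr_right fun hin => ?_
  rw [yamPerm_lt_iff_row_lt T (by omega) (by omega) (by omega),
    yamPerm_lt_iff_row_le T (by omega) (by omega) hin]

theorem valleySetP_yamPerm (T : SkewSYT lam mu n) :
    valleySetP n (yamPerm lam mu n T.row) = T.peakSet := by
  ext i
  refine and_congr_right fun hi2 => and_congr_right fun hin => ?_
  rw [yamPerm_lt_iff_row_le T (by omega) (by omega) (by omega),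
    yamPerm_lt_iff_row_lt T (by omega) (by omega) hin]

end Yamanouchi

section KnuthMoves

variable {lam mu : ℕ → ℕ} {n : ℕ}

open scoped Classical in
/-- The smaller of the two adjacent entries exchanged by `κ_i`. -/
noncomputable def kSwapPos (row : ℕ → ℕ) (i : ℕ) : ℕ :=
  if swapLowCond row i then i - 1 else i

theorem kSwap_eq_swapFun (row : ℕ → ℕ) {i : ℕ} (hi : 1 ≤ i) (f : ℕ → ℕ) :
    kSwap row i f = swapFun f (kSwapPos row i) (kSwapPos row i + 1) := by
  unfold kSwap kSwapPos
  split_ifs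
  · rw [Nat.sub_add_cancel hi]
  · rfl

theorem mem_peakSet_union_valleySet {T : SkewSYT lam mu n} {i : ℕ} :
    i ∈ T.peakSet ∪ T.valleySet ↔ 2 ≤ i ∧ i + 1 ≤ n ∧
      ((T.row i ≤ T.row (i - 1) ∧ T.row i < T.row (i + 1)) ∨
        (T.row (i - 1) < T.row i ∧ T.row (i + 1) ≤ T.row i)) := by
  simp only [SkewSYT.peakSet, SkewSYT.valleySet, Set.mem_union, Set.mem_ofPred_eq]
  tauto

theorem kSwapPos_spec (T : SkewSYT lam mu n) {i : ℕ} (hi : i ∈ T.peakSet ∪ T.valleySet) :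
    1 ≤ kSwapPos T.row i ∧ kSwapPos T.row i + 1 ≤ n ∧
      T.row (kSwapPos T.row i) ≠ T.row (kSwapPos T.row i + 1) := by
  rw [mem_peakSet_union_valleySet] at hi
  unfold kSwapPos swapLowCond
  split_ifs
  · rw [Nat.sub_add_cancel (by omega)]
    omega
  · omega

theorem col_kSwapPos_ne (h : IsSkewShape lam mu) (T : SkewSYT lam mu n) {i : ℕ}
    (hi : i ∈ T.peakSet ∪ T.valleySet) :
    T.col (kSwapPos T.row i) ≠ T.col (kSwapPos T.row i + 1) := by
  rw [mem_peakSet_union_valleySet] at hi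
  obtain ⟨k, rfl⟩ : ∃ k, i = k + 1 := ⟨i - 1, by omega⟩
  simp only [kSwapPos, swapLowCond, Nat.add_sub_cancel, add_assoc, Nat.reduceAdd] at hi ⊢
  obtain ⟨hk1, hkn, hi⟩ := hi
  have row_lt_of_col_eq (l : ℕ) (hl1 : 1 ≤ l) (hln : l + 1 ≤ n) :
      T.col l = T.col (l + 1) → T.row l < T.row (l + 1) :=
    T.col_inc l (l + 1) hl1 (by omega) hln
  split_ifs with hcase
  · rcases hcase with hvalley | hpeak
    · exact T.col_ne_col_succ_of_valley h (by omega) hkn hvalley.2.2 hvalley.2.1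
    · intro hc
      have := row_lt_of_col_eq k (by omega) (by omega) hc
      omega
  · rcases hi with hpeak | hvalley
    · exact T.col_succ_ne_col_succ_succ_of_peak h (by omega) hkn hpeak.1 (by omega)
    · intro hc
      have : T.row (k + 1) < T.row (k + 2) := row_lt_of_col_eq (k + 1) (by omega) hkn hc
      omega

theorem kappaP_yamPerm (T : SkewSYT lam mu n) {i : ℕ} (hi2 : 2 ≤ i) (hin : i + 1 ≤ n) :
    kappaP (yamPerm lam mu n T.row) i = kSwap T.row i (yamPerm lam mu n T.row) := by
  simp only [kappaP, kSwap, swapLowCond,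
    yamPerm_lt_iff_row_lt T (j := i - 1) (k := i) (by omega) (by omega) (by omega),
    yamPerm_lt_iff_row_le T (j := i) (k := i + 1) (by omega) (by omega) hin,
    yamPerm_lt_iff_row_lt T (j := i - 1) (k := i + 1) (by omega) (by omega) hin,
    yamPerm_lt_iff_row_le T (j := i - 1) (k := i) (by omega) (by omega) (by omega),
    yamPerm_lt_iff_row_lt T (j := i) (k := i + 1) (by omega) (by omega) hin,
    yamPerm_lt_iff_row_le T (j := i - 1) (k := i + 1) (by omega) (by omega) hin]
  split_ifs with hc
  · simp only [hc, if_true]; rfl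
  · simp only [hc, if_false]; rfl

theorem yamPerm_kRow (T : SkewSYT lam mu n) {i : ℕ} (hi : i ∈ T.peakSet ∪ T.valleySet) :
    yamPerm lam mu n (kRow T i) = kappaP (yamPerm lam mu n T.row) i := by
  obtain ⟨hi2, hin, -⟩ := mem_peakSet_union_valleySet.1 hi
  obtain ⟨-, hpn, hrow⟩ := kSwapPos_spec T hi
  rw [kappaP_yamPerm T hi2 hin, kRow, kSwap_eq_swapFun _ (by omega),
    kSwap_eq_swapFun _ (by omega), yamPerm_swapFun _ hpn hrow]

theorem SkewSYT.exists_kRow_kCol (h : IsSkewShape lam mu) (T : SkewSYT lam mu n) {i : ℕ}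
    (hi : i ∈ T.peakSet ∪ T.valleySet) :
    ∃ S : SkewSYT lam mu n, S.row = kRow T i ∧ S.col = kCol T i := by
  have hi1 : 1 ≤ i := by have := mem_peakSet_union_valleySet.1 hi; omega
  obtain ⟨hp1, hpn, hrow⟩ := kSwapPos_spec T hi
  refine ⟨T.swapSucc _ hp1 hpn hrow (col_kSwapPos_ne h T hi), ?_, ?_⟩
  · rw [kRow, kSwap_eq_swapFun _ hi1, swapFun_eq_comp_swap]
    rfl
  · rw [kCol, kSwap_eq_swapFun _ hi1, swapFun_eq_comp_swap]
    rfl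

theorem kStepP_iff {w w' : ℕ → ℕ} :
    KStepP n w w' ↔ ∃ i ∈ peakSetP n w ∪ valleySetP n w, w' = kappaP w i := by
  simp only [KStepP, peakSetP, valleySetP, Set.mem_union, Set.mem_ofPred_eq]
  grind

theorem kStepP_yamPerm_iff (T : SkewSYT lam mu n) {w' : ℕ → ℕ} :
    KStepP n (yamPerm lam mu n T.row) w' ↔
      ∃ i ∈ T.peakSet ∪ T.valleySet, w' = kappaP (yamPerm lam mu n T.row) i := by
  rw [kStepP_iff, peakSetP_yamPerm, valleySetP_yamPerm, Set.union_comm]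

theorem KStepT.kStepP_yamPerm {T S : SkewSYT lam mu n} (hTS : KStepT T S) :
    KStepP n (yamPerm lam mu n T.row) (yamPerm lam mu n S.row) := by
  obtain ⟨i, hi, hrow, -⟩ := hTS
  exact (kStepP_yamPerm_iff T).2 ⟨i, hi, by rw [hrow, yamPerm_kRow T hi]⟩

theorem exists_kStepT_of_kStepP (h : IsSkewShape lam mu) (T : SkewSYT lam mu n) {w' : ℕ → ℕ}
    (hw : KStepP n (yamPerm lam mu n T.row) w') :
    ∃ S, KStepT T S ∧ yamPerm lam mu n S.row = w' := by
  obtain ⟨i, hi, rfl⟩ := (kStepP_yamPerm_iff T).1 hw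
  obtain ⟨S, hrow, hcol⟩ := T.exists_kRow_kCol h hi
  exact ⟨S, ⟨i, hi, hrow, hcol⟩, by rw [hrow, yamPerm_kRow T hi]⟩

end KnuthMoves

/-- Two standard Young tableaux of the same skew shape `lam/mu` are Knuth-equivalent
(connected by a sequence of Knuth transformations on SYTs) if and only if their
Yamanouchi permutations are Knuth-equivalent as permutations. -/
theorem stmt8 (lam mu : ℕ → ℕ) (n : ℕ) (h : IsSkewShape lam mu)
    (T S : SkewSYT lam mu n) :
    Relation.ReflTransGen KStepT T S ↔
      KEquivP n (yamPerm lam mu n T.row) (yamPerm lam mu n S.row) :=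
  ⟨Relation.ReflTransGen.lift (fun U => yamPerm lam mu n U.row)
      (fun _ _ => KStepT.kStepP_yamPerm) T S,
    Relation.ReflTransGen.of_injective_lift _ yamPerm_row_injective
      fun U _ => exists_kStepT_of_kStepP h U⟩
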